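/- arXiv:2004.13986 — 3 statements merged into one kernel-verified Lean document; each statement's English description precedes it below -/
import Mathlib

section
/- Let R > 0, ξ > 0, and let F : [0,R) → (0,∞) be differentiable with F(r) → +∞ as r → R⁻. Suppose F'(r) / F(r)^3 → ξ as r → R⁻. Then F(r) · (2ξ(R−r))^{1/2} → 1 as r → R⁻, i.e. F(r) ∼ (2ξ(R−r))^{−1/2}. -/
open Filter

/-- Asymptotic integration lemma: if `F : [0,R) → (0,∞)` is differentiable with
`F(r) → ∞` and `F'(r)/F(r)³ → ξ > 0` as `r → R⁻`, then
`F(r)·√(2ξ(R-r)) → 1`, i.e. `F(r) ∼ (2ξ(R-r))^{-1/2}`. -/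
theorem stmt6 (R ξ : ℝ) (hR : 0 < R) (hξ : 0 < ξ) (F F' : ℝ → ℝ)
    (hder : ∀ r ∈ Set.Ico (0 : ℝ) R, HasDerivAt F (F' r) r)
    (hpos : ∀ r ∈ Set.Ico (0 : ℝ) R, 0 < F r)
    (hinf : Tendsto F (nhdsWithin R (Set.Iio R)) atTop)
    (hlim : Tendsto (fun r => F' r / F r ^ 3) (nhdsWithin R (Set.Iio R)) (nhds ξ)) :
    Tendsto (fun r => F r * Real.sqrt (2 * ξ * (R - r)))
      (nhdsWithin R (Set.Iio R)) (nhds 1) := by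
  set l := nhdsWithin R (Set.Iio R)
  -- eventually r ∈ Ioo 0 R
  have hev : ∀ᶠ r in l, r ∈ Set.Ioo 0 R := by
    have h1 : ∀ᶠ r in l, (0:ℝ) < r :=
      eventually_nhdsWithin_of_eventually_nhds (eventually_gt_nhds hR)
    have h2 : ∀ᶠ r in l, r < R := eventually_mem_nhdsWithin
    filter_upwards [h1, h2] with r h1 h2 using ⟨h1, h2⟩
  -- L'Hôpital
  have key : Tendsto (fun r => (1 / (2 * F r ^ 2)) / (R - r)) l (nhds ξ) := by
    have hff' : ∀ x ∈ Set.Ioo (0:ℝ) R,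
        HasDerivAt (fun r => 1 / (2 * F r ^ 2)) (-(F' x) / (F x ^ 3)) x := by
      intro x hx
      have hx' : x ∈ Set.Ico (0:ℝ) R := ⟨hx.1.le, hx.2⟩
      have hF := hder x hx'
      have hFpos := hpos x hx'
      have h1 : HasDerivAt (fun r => 2 * F r ^ 2) (2 * (2 * F x * F' x)) x := by
        simpa using ((hF.pow 2).const_mul 2)
      have hne : 2 * F x ^ 2 ≠ 0 := by positivity
      have h2 := h1.inv hne
      have : -(2 * (2 * F x * F' x)) / (2 * F x ^ 2) ^ 2 = -(F' x) / (F x ^ 3) := by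
        field_simp
      rw [← this]
      simpa only [Pi.inv_def, one_div] using h2
    have hgg' : ∀ x ∈ Set.Ioo (0:ℝ) R, HasDerivAt (fun r => R - r) (-1 : ℝ) x := by
      intro x _
      simpa using ((hasDerivAt_id x).const_sub R)
    have hg' : ∀ x ∈ Set.Ioo (0:ℝ) R, (-1 : ℝ) ≠ 0 := fun _ _ => by norm_num
    have hfb : Tendsto (fun r => 1 / (2 * F r ^ 2)) l (nhds 0) := by
      have h1 : Tendsto (fun r => 2 * F r ^ 2) l atTop :=
        (((tendsto_pow_atTop two_ne_zero).comp hinf)).const_mul_atTop two_pos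
      exact Tendsto.congr (fun r => (one_div _).symm) h1.inv_tendsto_atTop
    have hgb : Tendsto (fun r => R - r) l (nhds 0) := by
      have : Tendsto (fun r : ℝ => R - r) (nhds R) (nhds (R - R)) :=
        (tendsto_id.const_sub R)
      simpa using this.mono_left nhdsWithin_le_nhds
    have hdiv : Tendsto (fun x => (-(F' x) / (F x ^ 3)) / (-1 : ℝ)) l (nhds ξ) := by
      simpa [neg_div, div_neg] using hlim
    exact HasDerivAt.lhopital_zero_left_on_Ioo hR hff' hgg' hg' hfb hgb hdiv
  -- turn into F r ^ 2 * (2ξ(R-r)) → 1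
  have key2 : Tendsto (fun r => F r ^ 2 * (2 * ξ * (R - r))) l (nhds 1) := by
    have h := ((tendsto_const_nhds : Tendsto (fun _ : ℝ => ξ) l (nhds ξ)).div key hξ.ne')
    have : ∀ᶠ r in l, ξ / ((1 / (2 * F r ^ 2)) / (R - r)) = F r ^ 2 * (2 * ξ * (R - r)) := by
      filter_upwards [hev] with r hr
      have hFpos := hpos r ⟨hr.1.le, hr.2⟩
      have hRr : R - r ≠ 0 := by linarith [hr.2]
      field_simp
    have := h.congr' this
    simpa [div_self hξ.ne'] using this
  have key3 : Tendsto (fun r => Real.sqrt (F r ^ 2 * (2 * ξ * (R - r)))) l (nhds 1) := by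
    have := (Real.continuous_sqrt.continuousAt.tendsto.comp key2)
    rw [Real.sqrt_one] at this
    exact this
  refine key3.congr' ?_
  filter_upwards [hev] with r hr
  have hFpos := hpos r ⟨hr.1.le, hr.2⟩
  rw [Real.sqrt_mul (sq_nonneg _), Real.sqrt_sq hFpos.le]
end

section
/- Let (Σ_Z, T) be a two-sided subshift over a countable alphabet (sequences indexed by ℤ with admissible transitions, T the left shift), and let f : Σ_Z → ℝ be bounded and ρ-locally Hölder, meaning sup{|f(x)−f(y)| : x_i = y_i for |i| ≤ n} ≤ C ρ^n for all n ≥ 1. Then there exist bounded functions g, u : Σ_Z → ℝ, both ρ^{1/2}-locally Hölder, such that f = g + u − u∘T, and g(x) depends only on the coordinates (x_n)_{n≥0} (so g induces a function on the one-sided shift). Moreover f ↦ g and f ↦ u are continuous linear maps between the corresponding Hölder-norm Banach spaces. -/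
open Filter Finset Topology

namespace Stmt9Aux
open scoped Classical

/-- Submodule of convergent real sequences. -/
noncomputable def limSub : Submodule ℝ (ℕ → ℝ) where
  carrier := {s | ∃ l : ℝ, Tendsto s atTop (nhds l)}
  add_mem' := by rintro s t ⟨l₁, h₁⟩ ⟨l₂, h₂⟩; exact ⟨l₁ + l₂, h₁.add h₂⟩
  zero_mem' := ⟨0, tendsto_const_nhds⟩
  smul_mem' := by rintro c s ⟨l, h⟩; exact ⟨c * l, h.const_mul c⟩

/-- Limit as a linear map on the subspace of convergent sequences. -/
noncomputable def limFun : limSub →ₗ[ℝ] ℝ where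
  toFun s := limUnder atTop (s : ℕ → ℝ)
  map_add' := by
    rintro ⟨s, ls, hs⟩ ⟨t, lt, ht⟩
    show limUnder atTop (s + t) = limUnder atTop s + limUnder atTop t
    rw [hs.limUnder_eq, ht.limUnder_eq]
    exact Tendsto.limUnder_eq (hs.add ht)
  map_smul' := by
    rintro c ⟨s, ls, hs⟩
    show limUnder atTop (c • s) = c • limUnder atTop s
    rw [hs.limUnder_eq]
    exact Tendsto.limUnder_eq (hs.const_smul c)

/-- A linear extension of the limit functional to all real sequences. -/
noncomputable def LIM : (ℕ → ℝ) →ₗ[ℝ] ℝ := (LinearMap.exists_extend limFun).choose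

lemma LIM_eq {s : ℕ → ℝ} {l : ℝ} (h : Tendsto s atTop (nhds l)) : LIM s = l := by
  have hspec := (LinearMap.exists_extend limFun).choose_spec
  have h2 := DFunLike.congr_fun hspec (⟨s, ⟨l, h⟩⟩ : limSub)
  have h3 : LIM s = limUnder atTop s := h2
  rw [h3, h.limUnder_eq]

variable {S : Type*} (A : S → S → Prop)

/-- Admissibility. -/
def Adm (x : ℤ → S) : Prop := ∀ i, A (x i) (x (i + 1))

/-- An admissible sequence through `s` (when one exists). -/
noncomputable def past (s : S) : ℤ → S :=
  if h : ∃ z : ℤ → S, Adm A z ∧ z 0 = s then h.choose else fun _ => s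

/-- Shift by `j`. -/
def shf (j : ℕ) (x : ℤ → S) : ℤ → S := fun n => x (n + j)

/-- Replace the past of `x` by a fixed admissible past depending only on `x 0`. -/
noncomputable def rfut (x : ℤ → S) : ℤ → S :=
  fun i => if 0 ≤ i then x i else past A (x 0) i

lemma past_spec {s : S} (h : ∃ z : ℤ → S, Adm A z ∧ z 0 = s) :
    Adm A (past A s) ∧ past A s 0 = s := by
  classical
  rw [past, dif_pos h]; exact h.choose_spec

lemma shf_apply (j : ℕ) (x : ℤ → S) (n : ℤ) : shf j x n = x (n + j) := rfl

lemma shf_adm {x : ℤ → S} (hx : Adm A x) (j : ℕ) : Adm A (shf j x) := by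
  intro i
  have := hx (i + j)
  simpa [shf_apply, add_right_comm] using this

lemma shf_zero (x : ℤ → S) : shf 0 x = x := by
  funext n; simp [shf_apply]

lemma shf_shf (j : ℕ) (x : ℤ → S) : shf j (shf 1 x) = shf (j + 1) x := by
  funext n; simp [shf_apply]; ring_nf

lemma rfut_adm {x : ℤ → S} (hx : Adm A x) : Adm A (rfut A x) := by
  have hex : ∃ z : ℤ → S, Adm A z ∧ z 0 = x 0 := ⟨x, hx, rfl⟩
  obtain ⟨hp, hp0⟩ := past_spec A hex
  intro i
  rcases lt_trichotomy i (-1) with h | h | h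
  · have h1 : ¬ (0 ≤ i) := by omega
    have h2 : ¬ (0 ≤ i + 1) := by omega
    simpa [rfut, h1, h2] using hp i
  · subst h
    have := hp (-1)
    simpa [rfut, hp0] using this
  · have h1 : (0:ℤ) ≤ i := by omega
    have h2 : (0:ℤ) ≤ i + 1 := by omega
    simpa [rfut, h1, h2] using hx i

lemma rfut_apply_nonneg (x : ℤ → S) {i : ℤ} (hi : 0 ≤ i) : rfut A x i = x i := by
  simp [rfut, hi]

/-- If `x` and `y` agree on `0 ≤ i ≤ n` then `rfut x` and `rfut y` agree on `i ≤ n`. -/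
lemma rfut_agree {x y : ℤ → S} {n : ℤ} (h0 : x 0 = y 0)
    (h : ∀ i : ℤ, 0 ≤ i → i ≤ n → x i = y i) :
    ∀ i : ℤ, i ≤ n → rfut A x i = rfut A y i := by
  intro i hi
  by_cases hp : 0 ≤ i
  · simp [rfut, hp, h i hp hi]
  · simp [rfut, hp, h0]


section Series

variable (f : (ℤ → S) → ℝ)

/-- Terms of the series defining `u`. -/
noncomputable def aSeq (x : ℤ → S) (j : ℕ) : ℝ :=
  f (shf j x) - f (shf j (rfut A x))

/-- Terms of the series defining `g`. -/
noncomputable def bSeq (x : ℤ → S) (j : ℕ) : ℝ :=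
  f (shf (j + 1) (rfut A x)) - f (shf j (rfut A (shf 1 x)))

/-- The transfer function `u`. -/
noncomputable def UmD (x : ℤ → S) : ℝ :=
  LIM (fun N => ∑ j ∈ range N, aSeq A f x j)

/-- The one-sided function `g`. -/
noncomputable def GmD (x : ℤ → S) : ℝ :=
  LIM (fun N => f (rfut A x) + ∑ j ∈ range N, bSeq A f x j)

lemma UmD_add (f₁ f₂ : (ℤ → S) → ℝ) : UmD A (f₁ + f₂) = UmD A f₁ + UmD A f₂ := by
  funext x
  have h : (fun N => ∑ j ∈ range N, aSeq A (f₁ + f₂) x j)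
      = (fun N => ∑ j ∈ range N, aSeq A f₁ x j) + (fun N => ∑ j ∈ range N, aSeq A f₂ x j) := by
    funext N
    simp only [Pi.add_apply, ← Finset.sum_add_distrib]
    refine Finset.sum_congr rfl fun j _ => ?_
    simp only [aSeq, Pi.add_apply]; ring
  show LIM _ = LIM _ + LIM _
  rw [h, map_add]

lemma UmD_smul (c : ℝ) (f : (ℤ → S) → ℝ) : UmD A (c • f) = c • UmD A f := by
  funext x
  have h : (fun N => ∑ j ∈ range N, aSeq A (c • f) x j)
      = c • (fun N => ∑ j ∈ range N, aSeq A f x j) := by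
    funext N
    simp only [Pi.smul_apply, smul_eq_mul, Finset.mul_sum]
    refine Finset.sum_congr rfl fun j _ => ?_
    simp only [aSeq, Pi.smul_apply, smul_eq_mul]; ring
  show LIM _ = c • LIM _
  rw [h, map_smul]

lemma GmD_add (f₁ f₂ : (ℤ → S) → ℝ) : GmD A (f₁ + f₂) = GmD A f₁ + GmD A f₂ := by
  funext x
  have h : (fun N => (f₁ + f₂) (rfut A x) + ∑ j ∈ range N, bSeq A (f₁ + f₂) x j)
      = (fun N => f₁ (rfut A x) + ∑ j ∈ range N, bSeq A f₁ x j)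
        + (fun N => f₂ (rfut A x) + ∑ j ∈ range N, bSeq A f₂ x j) := by
    funext N
    simp only [Pi.add_apply, ← Finset.sum_add_distrib]
    rw [show (∑ j ∈ range N, bSeq A (f₁ + f₂) x j)
        = ∑ j ∈ range N, (bSeq A f₁ x j + bSeq A f₂ x j) from
      Finset.sum_congr rfl fun j _ => by simp only [bSeq, Pi.add_apply]; ring]
    rw [Finset.sum_add_distrib]; ring
  show LIM _ = LIM _ + LIM _
  rw [h, map_add]

lemma GmD_smul (c : ℝ) (f : (ℤ → S) → ℝ) : GmD A (c • f) = c • GmD A f := by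
  funext x
  have h : (fun N => (c • f) (rfut A x) + ∑ j ∈ range N, bSeq A (c • f) x j)
      = c • (fun N => f (rfut A x) + ∑ j ∈ range N, bSeq A f x j) := by
    funext N
    simp only [Pi.smul_apply, smul_eq_mul, Finset.mul_sum]
    rw [show (∑ j ∈ range N, bSeq A (c • f) x j)
        = ∑ j ∈ range N, c * bSeq A f x j from
      Finset.sum_congr rfl fun j _ => by simp only [bSeq, Pi.smul_apply, smul_eq_mul]; ring]
    rw [← Finset.mul_sum]; ring
  show LIM _ = c • LIM _
  rw [h, map_smul]

/-- `g` depends only on the nonnegative coordinates. -/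
lemma GmD_future {x y : ℤ → S} (hxy : ∀ i : ℤ, 0 ≤ i → x i = y i) :
    GmD A f x = GmD A f y := by
  have h0 : x 0 = y 0 := hxy 0 le_rfl
  have h1 : x 1 = y 1 := hxy 1 one_pos.le
  have hr : rfut A x = rfut A y := by
    funext i
    by_cases hi : 0 ≤ i
    · simp [rfut, hi, hxy i hi]
    · simp [rfut, hi, h0]
  have hr1 : rfut A (shf 1 x) = rfut A (shf 1 y) := by
    funext i
    by_cases hi : 0 ≤ i
    · have : (0:ℤ) ≤ i + 1 := by omega
      simp [rfut, hi, shf_apply, hxy _ this]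
    · have : shf 1 x 0 = shf 1 y 0 := by
        simp only [shf_apply]; norm_num [h1]
      simp [rfut, hi, this]
  unfold GmD bSeq
  rw [hr, hr1]

end Series


section Analytic

variable {ρ M C : ℝ} {f : (ℤ → S) → ℝ}

/-- Abbreviation for the two hypotheses on `f`. -/
def Hyp (A : S → S → Prop) (ρ M C : ℝ) (f : (ℤ → S) → ℝ) : Prop :=
  (∀ x : ℤ → S, Adm A x → |f x| ≤ M) ∧
  (∀ n : ℕ, 1 ≤ n → ∀ x y : ℤ → S, Adm A x → Adm A y →
    (∀ i : ℤ, |i| ≤ (n : ℤ) → x i = y i) → |f x - f y| ≤ C * ρ ^ n)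

lemma abs_f_sub_le (h : Hyp A ρ M C f) {x y : ℤ → S} (hx : Adm A x) (hy : Adm A y) :
    |f x - f y| ≤ 2 * M := by
  calc |f x - f y| ≤ |f x| + |f y| := abs_sub _ _
  _ ≤ 2 * M := by have := h.1 x hx; have := h.1 y hy; linarith

lemma aSeq_bound' (h : Hyp A ρ M C f) {x : ℤ → S} (hx : Adm A x) {j : ℕ} (hj : 1 ≤ j) :
    |aSeq A f x j| ≤ C * ρ ^ j := by
  refine h.2 j hj _ _ (shf_adm A hx j) (shf_adm A (rfut_adm A hx) j) fun i hi => ?_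
  have hi' := abs_le.mp hi
  rw [shf_apply, shf_apply, rfut_apply_nonneg]
  omega

lemma aSeq_bound (hρ0 : 0 < ρ) (hM0 : 0 ≤ M) (hC0 : 0 ≤ C) (h : Hyp A ρ M C f)
    {x : ℤ → S} (hx : Adm A x) (j : ℕ) :
    |aSeq A f x j| ≤ (2 * M + C) * ρ ^ j := by
  rcases Nat.eq_zero_or_pos j with hj | hj
  · subst hj
    simp only [pow_zero, mul_one]
    have := abs_f_sub_le A h (shf_adm A hx 0) (shf_adm A (rfut_adm A hx) 0)
    calc |aSeq A f x 0| ≤ 2 * M := this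
    _ ≤ 2 * M + C := by linarith
  · calc |aSeq A f x j| ≤ C * ρ ^ j := aSeq_bound' A h hx hj
    _ ≤ (2 * M + C) * ρ ^ j := by
        have : (0:ℝ) ≤ ρ ^ j := pow_nonneg hρ0.le j
        nlinarith

lemma bSeq_bound' (h : Hyp A ρ M C f) {x : ℤ → S} (hx : Adm A x) {j : ℕ} (hj : 1 ≤ j) :
    |bSeq A f x j| ≤ C * ρ ^ j := by
  refine h.2 j hj _ _ (shf_adm A (rfut_adm A hx) (j + 1))
    (shf_adm A (rfut_adm A (shf_adm A hx 1)) j) fun i hi => ?_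
  have hi' := abs_le.mp hi
  rw [shf_apply, shf_apply, rfut_apply_nonneg, rfut_apply_nonneg, shf_apply]
  · congr 1; push_cast; ring
  · omega
  · push_cast; omega

lemma bSeq_bound (hρ0 : 0 < ρ) (hM0 : 0 ≤ M) (hC0 : 0 ≤ C) (h : Hyp A ρ M C f)
    {x : ℤ → S} (hx : Adm A x) (j : ℕ) :
    |bSeq A f x j| ≤ (2 * M + C) * ρ ^ j := by
  rcases Nat.eq_zero_or_pos j with hj | hj
  · subst hj
    simp only [pow_zero, mul_one]
    have := abs_f_sub_le A h (shf_adm A (rfut_adm A hx) 1)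
      (shf_adm A (rfut_adm A (shf_adm A hx 1)) 0)
    calc |bSeq A f x 0| ≤ 2 * M := this
    _ ≤ 2 * M + C := by linarith
  · calc |bSeq A f x j| ≤ C * ρ ^ j := bSeq_bound' A h hx hj
    _ ≤ (2 * M + C) * ρ ^ j := by
        have : (0:ℝ) ≤ ρ ^ j := pow_nonneg hρ0.le j
        nlinarith

lemma aSummable (hρ0 : 0 < ρ) (hρ1 : ρ < 1) (hM0 : 0 ≤ M) (hC0 : 0 ≤ C)
    (h : Hyp A ρ M C f) {x : ℤ → S} (hx : Adm A x) : Summable (aSeq A f x) := by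
  refine Summable.of_abs (Summable.of_nonneg_of_le (fun j => abs_nonneg _)
    (fun j => aSeq_bound A hρ0 hM0 hC0 h hx j) ?_)
  exact (summable_geometric_of_lt_one hρ0.le hρ1).mul_left _

lemma bSummable (hρ0 : 0 < ρ) (hρ1 : ρ < 1) (hM0 : 0 ≤ M) (hC0 : 0 ≤ C)
    (h : Hyp A ρ M C f) {x : ℤ → S} (hx : Adm A x) : Summable (bSeq A f x) := by
  refine Summable.of_abs (Summable.of_nonneg_of_le (fun j => abs_nonneg _)
    (fun j => bSeq_bound A hρ0 hM0 hC0 h hx j) ?_)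
  exact (summable_geometric_of_lt_one hρ0.le hρ1).mul_left _

lemma UmD_eq (hρ0 : 0 < ρ) (hρ1 : ρ < 1) (hM0 : 0 ≤ M) (hC0 : 0 ≤ C)
    (h : Hyp A ρ M C f) {x : ℤ → S} (hx : Adm A x) :
    UmD A f x = ∑' j, aSeq A f x j :=
  LIM_eq ((aSummable A hρ0 hρ1 hM0 hC0 h hx).hasSum.tendsto_sum_nat)

lemma GmD_eq (hρ0 : 0 < ρ) (hρ1 : ρ < 1) (hM0 : 0 ≤ M) (hC0 : 0 ≤ C)
    (h : Hyp A ρ M C f) {x : ℤ → S} (hx : Adm A x) :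
    GmD A f x = f (rfut A x) + ∑' j, bSeq A f x j :=
  LIM_eq (tendsto_const_nhds.add
    ((bSummable A hρ0 hρ1 hM0 hC0 h hx).hasSum.tendsto_sum_nat))

lemma tsum_abs_le' (hρ0 : 0 < ρ) (hρ1 : ρ < 1) {D : ℝ} {g : ℕ → ℝ}
    (hb : ∀ j, |g j| ≤ D * ρ ^ j) :
    |∑' j, g j| ≤ D * (1 - ρ)⁻¹ := by
  have hsum : Summable fun j => D * ρ ^ j :=
    (summable_geometric_of_lt_one hρ0.le hρ1).mul_left _
  have habs : Summable fun j => |g j| :=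
    Summable.of_nonneg_of_le (fun j => abs_nonneg _) hb hsum
  calc |∑' j, g j| ≤ ∑' j, |g j| := by
        simpa using norm_tsum_le_tsum_norm (f := g) (by simpa using habs)
  _ ≤ ∑' j, D * ρ ^ j := Summable.tsum_le_tsum hb habs hsum
  _ = D * (1 - ρ)⁻¹ := by
        rw [tsum_mul_left, tsum_geometric_of_lt_one hρ0.le hρ1]

lemma UmD_bound (hρ0 : 0 < ρ) (hρ1 : ρ < 1) (hM0 : 0 ≤ M) (hC0 : 0 ≤ C)
    (h : Hyp A ρ M C f) {x : ℤ → S} (hx : Adm A x) :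
    |UmD A f x| ≤ (2 * M + C) * (1 - ρ)⁻¹ := by
  rw [UmD_eq A hρ0 hρ1 hM0 hC0 h hx]
  exact tsum_abs_le' hρ0 hρ1 (fun j => aSeq_bound A hρ0 hM0 hC0 h hx j)

lemma GmD_bound (hρ0 : 0 < ρ) (hρ1 : ρ < 1) (hM0 : 0 ≤ M) (hC0 : 0 ≤ C)
    (h : Hyp A ρ M C f) {x : ℤ → S} (hx : Adm A x) :
    |GmD A f x| ≤ M + (2 * M + C) * (1 - ρ)⁻¹ := by
  rw [GmD_eq A hρ0 hρ1 hM0 hC0 h hx]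
  have h1 : |f (rfut A x)| ≤ M := h.1 _ (rfut_adm A hx)
  have h2 := tsum_abs_le' hρ0 hρ1 (fun j => bSeq_bound A hρ0 hM0 hC0 h hx j)
  calc |f (rfut A x) + ∑' j, bSeq A f x j| ≤ |f (rfut A x)| + |∑' j, bSeq A f x j| :=
        abs_add_le _ _
  _ ≤ M + (2 * M + C) * (1 - ρ)⁻¹ := by linarith

/-- The cohomological identity. -/
lemma coh_identity (hρ0 : 0 < ρ) (hρ1 : ρ < 1) (hM0 : 0 ≤ M) (hC0 : 0 ≤ C)
    (h : Hyp A ρ M C f) {x : ℤ → S} (hx : Adm A x) :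
    f x = GmD A f x + UmD A f x - UmD A f (shf 1 x) := by
  have hx1 : Adm A (shf 1 x) := shf_adm A hx 1
  have ha := aSummable A hρ0 hρ1 hM0 hC0 h hx
  have hc := aSummable A hρ0 hρ1 hM0 hC0 h hx1
  have ha' : Summable fun j => aSeq A f x (j + 1) := (summable_nat_add_iff 1).2 ha
  have hkey : ∀ j, bSeq A f x j = aSeq A f (shf 1 x) j - aSeq A f x (j + 1) := by
    intro j
    simp only [bSeq, aSeq, shf_shf]
    ring
  rw [UmD_eq A hρ0 hρ1 hM0 hC0 h hx, UmD_eq A hρ0 hρ1 hM0 hC0 h hx1,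
    GmD_eq A hρ0 hρ1 hM0 hC0 h hx]
  have hb_eq : (∑' j, bSeq A f x j)
      = (∑' j, aSeq A f (shf 1 x) j) - ∑' j, aSeq A f x (j + 1) := by
    rw [← Summable.tsum_sub hc ha']
    exact tsum_congr hkey
  have htail : (∑ i ∈ range 1, aSeq A f x i) + (∑' j, aSeq A f x (j + 1))
      = ∑' j, aSeq A f x j := Summable.sum_add_tsum_nat_add 1 ha
  simp only [range_one, Finset.sum_singleton] at htail
  have ha0 : aSeq A f x 0 = f x - f (rfut A x) := by
    simp only [aSeq, shf_zero]
  rw [hb_eq]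
  linarith [htail, ha0.le, ha0.ge]

lemma UmD_holder (hρ0 : 0 < ρ) (hρ1 : ρ < 1) (hM0 : 0 ≤ M) (hC0 : 0 ≤ C)
    (h : Hyp A ρ M C f) {n : ℕ} (hn : 1 ≤ n) {x y : ℤ → S}
    (hx : Adm A x) (hy : Adm A y)
    (hxy : ∀ i : ℤ, |i| ≤ (n : ℤ) → x i = y i) :
    |UmD A f x - UmD A f y| ≤ (4 * C * (1 - ρ)⁻¹) * Real.sqrt ρ ^ n := by
  set s := Real.sqrt ρ with hs
  have hs0 : 0 ≤ s := Real.sqrt_nonneg ρ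
  have hs1 : s ≤ 1 := by
    rw [show (1:ℝ) = Real.sqrt 1 by simp]
    exact Real.sqrt_le_sqrt hρ1.le
  have hs2 : s ^ 2 = ρ := Real.sq_sqrt hρ0.le
  set m := n / 2 with hm
  have h0 : x 0 = y 0 := hxy 0 (by simp)
  have hr : ∀ i : ℤ, i ≤ (n:ℤ) → rfut A x i = rfut A y i :=
    rfut_agree A h0 (fun i hi hi' => hxy i (by rw [abs_le]; omega))
  set w : ℕ → ℝ := fun j => 2 * C * (if j ≤ m then ρ ^ (n - j) else ρ ^ j) with hw
  have hterm : ∀ j, |aSeq A f x j - aSeq A f y j| ≤ w j := by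
    intro j
    by_cases hj : j ≤ m
    · have hnj : 1 ≤ n - j := by omega
      have h1 : |f (shf j x) - f (shf j y)| ≤ C * ρ ^ (n - j) := by
        refine h.2 (n-j) hnj _ _ (shf_adm A hx j) (shf_adm A hy j) fun i hi => ?_
        have hi' := abs_le.mp hi
        rw [shf_apply, shf_apply]
        refine hxy _ ?_
        rw [abs_le]
        omega
      have h2 : |f (shf j (rfut A x)) - f (shf j (rfut A y))| ≤ C * ρ ^ (n - j) := by
        refine h.2 (n-j) hnj _ _ (shf_adm A (rfut_adm A hx) j)
          (shf_adm A (rfut_adm A hy) j) fun i hi => ?_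
        have hi' := abs_le.mp hi
        rw [shf_apply, shf_apply]
        exact hr _ (by omega)
      calc |aSeq A f x j - aSeq A f y j|
          = |(f (shf j x) - f (shf j y)) - (f (shf j (rfut A x)) - f (shf j (rfut A y)))| := by
            congr 1; simp only [aSeq]; ring
      _ ≤ |f (shf j x) - f (shf j y)| + |f (shf j (rfut A x)) - f (shf j (rfut A y))| :=
            abs_sub _ _
      _ ≤ 2 * C * ρ ^ (n - j) := by linarith
      _ = w j := by simp only [hw, if_pos hj]
    · have hj1 : 1 ≤ j := by omega
      calc |aSeq A f x j - aSeq A f y j| ≤ |aSeq A f x j| + |aSeq A f y j| := abs_sub _ _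
      _ ≤ 2 * C * ρ ^ j := by
          have := aSeq_bound' A h hx hj1
          have := aSeq_bound' A h hy hj1
          linarith
      _ = w j := by simp only [hw, if_neg hj]
  have hwtail : (fun j => w (j + (m+1))) = fun j => (2 * C * ρ ^ (m+1)) * ρ ^ j := by
    funext j
    have hj : ¬ (j + (m+1) ≤ m) := by omega
    simp only [hw, if_neg hj, pow_add]
    ring
  have hwsum : Summable w := by
    refine (summable_nat_add_iff (m+1)).1 ?_
    rw [hwtail]
    exact (summable_geometric_of_lt_one hρ0.le hρ1).mul_left _
  have hax := aSummable A hρ0 hρ1 hM0 hC0 h hx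
  have hay := aSummable A hρ0 hρ1 hM0 hC0 h hy
  have habs : Summable fun j => |aSeq A f x j - aSeq A f y j| :=
    Summable.of_nonneg_of_le (fun j => abs_nonneg _) hterm hwsum
  rw [UmD_eq A hρ0 hρ1 hM0 hC0 h hx, UmD_eq A hρ0 hρ1 hM0 hC0 h hy, ← Summable.tsum_sub hax hay]
  have hle : |∑' j, (aSeq A f x j - aSeq A f y j)| ≤ ∑' j, w j := by
    calc |∑' j, (aSeq A f x j - aSeq A f y j)| ≤ ∑' j, |aSeq A f x j - aSeq A f y j| := by
          simpa using norm_tsum_le_tsum_norm (f := fun j => aSeq A f x j - aSeq A f y j)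
            (by simpa using habs)
    _ ≤ ∑' j, w j := Summable.tsum_le_tsum hterm habs hwsum
  refine hle.trans ?_
  -- now estimate ∑' w
  have hgeom_sum : ∑ j ∈ range (m+1), ρ ^ j ≤ (1 - ρ)⁻¹ := by
    rw [← tsum_geometric_of_lt_one hρ0.le hρ1]
    exact Summable.sum_le_tsum _ (fun i _ => pow_nonneg hρ0.le i)
      (summable_geometric_of_lt_one hρ0.le hρ1)
  have hpow1 : ρ ^ (n - m) ≤ s ^ n := by
    have : ρ ^ (n - m) = s ^ (2 * (n - m)) := by rw [pow_mul, hs2]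
    rw [this]
    exact pow_le_pow_of_le_one hs0 hs1 (by omega)
  have hpow2 : ρ ^ (m + 1) ≤ s ^ n := by
    have : ρ ^ (m + 1) = s ^ (2 * (m + 1)) := by rw [pow_mul, hs2]
    rw [this]
    exact pow_le_pow_of_le_one hs0 hs1 (by omega)
  have e1 : ∑ j ∈ range (m+1), w j ≤ 2 * C * (1 - ρ)⁻¹ * s ^ n := by
    have hcongr : ∀ j ∈ range (m+1), w j = (2 * C * ρ ^ (n - m)) * ρ ^ (m - j) := by
      intro j hj
      rw [mem_range] at hj
      have hj' : j ≤ m := by omega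
      have : n - j = (n - m) + (m - j) := by omega
      simp only [hw, if_pos hj', this, pow_add]
      ring
    rw [Finset.sum_congr rfl hcongr, ← Finset.mul_sum]
    have hrefl : ∑ j ∈ range (m+1), ρ ^ (m - j) = ∑ j ∈ range (m+1), ρ ^ j := by
      have := Finset.sum_range_reflect (fun k => ρ ^ k) (m+1)
      simpa using this
    rw [hrefl]
    have hC2 : (0:ℝ) ≤ 2 * C * ρ ^ (n - m) := by positivity
    calc (2 * C * ρ ^ (n - m)) * ∑ j ∈ range (m+1), ρ ^ j
        ≤ (2 * C * ρ ^ (n - m)) * (1 - ρ)⁻¹ := by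
          apply mul_le_mul_of_nonneg_left hgeom_sum hC2
    _ ≤ 2 * C * (1 - ρ)⁻¹ * s ^ n := by
          have hinv : (0:ℝ) ≤ (1 - ρ)⁻¹ := inv_nonneg.mpr (by linarith)
          nlinarith [mul_le_mul_of_nonneg_left hpow1
            (by positivity : (0:ℝ) ≤ 2 * C * (1 - ρ)⁻¹)]
  have e2 : ∑' j, w (j + (m+1)) ≤ 2 * C * (1 - ρ)⁻¹ * s ^ n := by
    rw [hwtail, tsum_mul_left, tsum_geometric_of_lt_one hρ0.le hρ1]
    have hinv : (0:ℝ) ≤ (1 - ρ)⁻¹ := inv_nonneg.mpr (by linarith)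
    nlinarith [mul_le_mul_of_nonneg_left hpow2
      (by positivity : (0:ℝ) ≤ 2 * C * (1 - ρ)⁻¹)]
  have hsplit : ∑ j ∈ range (m+1), w j + ∑' j, w (j + (m+1)) = ∑' j, w j :=
    Summable.sum_add_tsum_nat_add (m+1) hwsum
  calc ∑' j, w j = ∑ j ∈ range (m+1), w j + ∑' j, w (j + (m+1)) := hsplit.symm
  _ ≤ 2 * C * (1 - ρ)⁻¹ * s ^ n + 2 * C * (1 - ρ)⁻¹ * s ^ n := add_le_add e1 e2
  _ = (4 * C * (1 - ρ)⁻¹) * s ^ n := by ring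

lemma GmD_holder (hρ0 : 0 < ρ) (hρ1 : ρ < 1) (hM0 : 0 ≤ M) (hC0 : 0 ≤ C)
    (h : Hyp A ρ M C f) {n : ℕ} (hn : 1 ≤ n) {x y : ℤ → S}
    (hx : Adm A x) (hy : Adm A y)
    (hxy : ∀ i : ℤ, |i| ≤ (n : ℤ) → x i = y i) :
    |GmD A f x - GmD A f y| ≤
      ((2 + 12 * (1 - ρ)⁻¹) / Real.sqrt ρ) * (M + C) * Real.sqrt ρ ^ n := by
  set s := Real.sqrt ρ with hs
  have hs0 : 0 < s := Real.sqrt_pos.mpr hρ0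
  have hs1 : s ≤ 1 := by
    rw [show (1:ℝ) = Real.sqrt 1 by simp]
    exact Real.sqrt_le_sqrt hρ1.le
  have hs2 : s ^ 2 = ρ := Real.sq_sqrt hρ0.le
  set e := (1 - ρ)⁻¹ with hedef
  have he : 0 ≤ e := inv_nonneg.mpr (by linarith)
  have hsn : (0:ℝ) ≤ s ^ n := pow_nonneg hs0.le n
  rcases eq_or_lt_of_le hn with hn1 | hn2
  · -- n = 1
    have hn1' : n = 1 := hn1.symm
    subst hn1'
    have hgx := GmD_bound A hρ0 hρ1 hM0 hC0 h hx
    have hgy := GmD_bound A hρ0 hρ1 hM0 hC0 h hy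
    have hB : |GmD A f x - GmD A f y| ≤ 2 * (M + (2 * M + C) * e) := by
      calc |GmD A f x - GmD A f y| ≤ |GmD A f x| + |GmD A f y| := abs_sub _ _
      _ ≤ 2 * (M + (2 * M + C) * e) := by linarith
    have hrhs : ((2 + 12 * e) / s) * (M + C) * s ^ 1 = (2 + 12 * e) * (M + C) := by
      field_simp
    rw [hrhs]
    have hMe : 0 ≤ M * e := mul_nonneg hM0 he
    have hCe : 0 ≤ C * e := mul_nonneg hC0 he
    nlinarith [hB, hMe, hCe]
  · -- n ≥ 2
    have hn2' : 2 ≤ n := hn2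
    have hm1 : 1 ≤ n - 1 := by omega
    have hx1 : Adm A (shf 1 x) := shf_adm A hx 1
    have hy1 : Adm A (shf 1 y) := shf_adm A hy 1
    have hxy1 : ∀ i : ℤ, |i| ≤ ((n - 1 : ℕ) : ℤ) → shf 1 x i = shf 1 y i := by
      intro i hi
      have hi' := abs_le.mp hi
      rw [shf_apply, shf_apply]
      refine hxy _ ?_
      rw [abs_le]
      omega
    have hU := UmD_holder A hρ0 hρ1 hM0 hC0 h hn hx hy hxy
    have hUT := UmD_holder A hρ0 hρ1 hM0 hC0 h hm1 hx1 hy1 hxy1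
    have hf := h.2 n hn x y hx hy hxy
    have hidx := coh_identity A hρ0 hρ1 hM0 hC0 h hx
    have hidy := coh_identity A hρ0 hρ1 hM0 hC0 h hy
    have hGx : GmD A f x = f x - UmD A f x + UmD A f (shf 1 x) := by linarith
    have hGy : GmD A f y = f y - UmD A f y + UmD A f (shf 1 y) := by linarith
    have hsplit : |GmD A f x - GmD A f y| ≤
        |f x - f y| + |UmD A f x - UmD A f y| + |UmD A f (shf 1 x) - UmD A f (shf 1 y)| := by
      rw [hGx, hGy]
      calc |f x - UmD A f x + UmD A f (shf 1 x) - (f y - UmD A f y + UmD A f (shf 1 y))|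
          = |(f x - f y) - (UmD A f x - UmD A f y)
              + (UmD A f (shf 1 x) - UmD A f (shf 1 y))| := by ring_nf
      _ ≤ |(f x - f y) - (UmD A f x - UmD A f y)|
            + |UmD A f (shf 1 x) - UmD A f (shf 1 y)| := abs_add_le _ _
      _ ≤ |f x - f y| + |UmD A f x - UmD A f y|
            + |UmD A f (shf 1 x) - UmD A f (shf 1 y)| := by
            have := abs_sub (f x - f y) (UmD A f x - UmD A f y)
            linarith
    have hρn : ρ ^ n ≤ s ^ n := by
      have h1 : ρ ^ n = s ^ (2 * n) := by rw [pow_mul, hs2]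
      rw [h1]
      exact pow_le_pow_of_le_one hs0.le hs1 (by omega)
    have hss : s ^ (n - 1) * s = s ^ n := by
      rw [← pow_succ]
      congr 1
      omega
    have hgoal : (C * ρ ^ n + 4 * C * e * s ^ n + 4 * C * e * s ^ (n - 1)) * s
        ≤ (2 + 12 * e) * (M + C) * s ^ n := by
      have hsn1 : (0:ℝ) ≤ s ^ (n-1) := pow_nonneg hs0.le _
      have t1 : C * ρ ^ n * s ≤ C * s ^ n := by
        have h1 : C * ρ ^ n * s ≤ C * ρ ^ n * 1 :=
          mul_le_mul_of_nonneg_left hs1 (by positivity)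
        have h2 : C * ρ ^ n ≤ C * s ^ n := mul_le_mul_of_nonneg_left hρn hC0
        linarith
      have t2 : 4 * C * e * s ^ n * s ≤ 4 * C * e * s ^ n := by
        have : 4 * C * e * s ^ n * s ≤ 4 * C * e * s ^ n * 1 :=
          mul_le_mul_of_nonneg_left hs1 (by
            have := mul_nonneg (mul_nonneg (by linarith : (0:ℝ) ≤ 4 * C) he) hsn
            linarith)
        linarith
      have t3 : 4 * C * e * s ^ (n - 1) * s = 4 * C * e * s ^ n := by
        rw [mul_assoc, hss]
      have t4 : C * s ^ n + 8 * C * e * s ^ n ≤ (2 + 12 * e) * (M + C) * s ^ n := by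
        have p1 : 0 ≤ M * s ^ n := mul_nonneg hM0 hsn
        have p2 : 0 ≤ C * s ^ n := mul_nonneg hC0 hsn
        have p3 : 0 ≤ M * e * s ^ n := mul_nonneg (mul_nonneg hM0 he) hsn
        have p4 : 0 ≤ C * e * s ^ n := mul_nonneg (mul_nonneg hC0 he) hsn
        nlinarith
      have expand : (C * ρ ^ n + 4 * C * e * s ^ n + 4 * C * e * s ^ (n - 1)) * s
          = C * ρ ^ n * s + 4 * C * e * s ^ n * s + 4 * C * e * s ^ (n - 1) * s := by ring
      linarith [t1, t2, t3, t4, expand]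
    have hrw : ((2 + 12 * e) / s) * (M + C) * s ^ n = ((2 + 12 * e) * (M + C) * s ^ n) / s := by
      ring
    rw [hrw, le_div_iff₀ hs0]
    calc |GmD A f x - GmD A f y| * s
        ≤ (C * ρ ^ n + 4 * C * e * s ^ n + 4 * C * e * s ^ (n - 1)) * s := by
          apply mul_le_mul_of_nonneg_right _ hs0.le
          calc |GmD A f x - GmD A f y|
              ≤ |f x - f y| + |UmD A f x - UmD A f y|
                + |UmD A f (shf 1 x) - UmD A f (shf 1 y)| := hsplit
          _ ≤ C * ρ ^ n + 4 * C * e * s ^ n + 4 * C * e * s ^ (n - 1) := by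
              have : (4 * C * (1 - ρ)⁻¹) * s ^ (n-1) = 4 * C * e * s ^ (n-1) := by
                rw [hedef]
              linarith [hU, hUT]
    _ ≤ (2 + 12 * e) * (M + C) * s ^ n := hgoal

end Analytic

end Stmt9Aux

/-- Sinai's cohomology lemma for a two-sided subshift over a countable alphabet: every
bounded ρ-locally Hölder function `f` on the two-sided shift can be written as
`f = g + u - u∘T` with `g, u` bounded and `√ρ`-locally Hölder, `g` depending only on the
nonnegative coordinates; moreover `f ↦ g` and `f ↦ u` are linear and continuous between
the corresponding Hölder-norm Banach spaces (encoded by the uniform constant `K`). -/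
theorem stmt9 {S : Type*} [Countable S] (A : S → S → Prop)
    (ρ : ℝ) (hρ0 : 0 < ρ) (hρ1 : ρ < 1) :
    ∃ (Gm Um : ((ℤ → S) → ℝ) → ((ℤ → S) → ℝ)) (K : ℝ), 0 ≤ K ∧
      -- linearity of f ↦ g and f ↦ u
      (∀ f₁ f₂ : (ℤ → S) → ℝ, Gm (f₁ + f₂) = Gm f₁ + Gm f₂) ∧
      (∀ (c : ℝ) (f : (ℤ → S) → ℝ), Gm (c • f) = c • Gm f) ∧
      (∀ f₁ f₂ : (ℤ → S) → ℝ, Um (f₁ + f₂) = Um f₁ + Um f₂) ∧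
      (∀ (c : ℝ) (f : (ℤ → S) → ℝ), Um (c • f) = c • Um f) ∧
      ∀ (f : (ℤ → S) → ℝ) (M C : ℝ), 0 ≤ M → 0 ≤ C →
        -- f is bounded by M on admissible sequences
        (∀ x : ℤ → S, (∀ i, A (x i) (x (i + 1))) → |f x| ≤ M) →
        -- f is ρ-locally Hölder with constant C
        (∀ n : ℕ, 1 ≤ n → ∀ x y : ℤ → S, (∀ i, A (x i) (x (i + 1))) →
          (∀ i, A (y i) (y (i + 1))) → (∀ i : ℤ, |i| ≤ (n : ℤ) → x i = y i) →
          |f x - f y| ≤ C * ρ ^ n) →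
        -- the cohomological identity f = g + u - u∘T
        (∀ x : ℤ → S, (∀ i, A (x i) (x (i + 1))) →
          f x = Gm f x + Um f x - Um f (fun n => x (n + 1))) ∧
        -- g depends only on the coordinates (x_n)_{n ≥ 0}
        (∀ x y : ℤ → S, (∀ i, A (x i) (x (i + 1))) → (∀ i, A (y i) (y (i + 1))) →
          (∀ i : ℤ, 0 ≤ i → x i = y i) → Gm f x = Gm f y) ∧
        -- g and u are bounded, with norm controlled by that of f
        (∀ x : ℤ → S, (∀ i, A (x i) (x (i + 1))) → |Gm f x| ≤ K * (M + C)) ∧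
        (∀ x : ℤ → S, (∀ i, A (x i) (x (i + 1))) → |Um f x| ≤ K * (M + C)) ∧
        -- g and u are √ρ-locally Hölder, with constant controlled by the norm of f
        (∀ n : ℕ, 1 ≤ n → ∀ x y : ℤ → S, (∀ i, A (x i) (x (i + 1))) →
          (∀ i, A (y i) (y (i + 1))) → (∀ i : ℤ, |i| ≤ (n : ℤ) → x i = y i) →
          |Gm f x - Gm f y| ≤ K * (M + C) * Real.sqrt ρ ^ n) ∧
        (∀ n : ℕ, 1 ≤ n → ∀ x y : ℤ → S, (∀ i, A (x i) (x (i + 1))) →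
          (∀ i, A (y i) (y (i + 1))) → (∀ i : ℤ, |i| ≤ (n : ℤ) → x i = y i) →
          |Um f x - Um f y| ≤ K * (M + C) * Real.sqrt ρ ^ n) := by
  classical
  set s := Real.sqrt ρ with hsdef
  have hs0 : 0 < s := Real.sqrt_pos.mpr hρ0
  have hs1 : s ≤ 1 := by
    rw [show (1:ℝ) = Real.sqrt 1 by simp]
    exact Real.sqrt_le_sqrt hρ1.le
  set e := (1 - ρ)⁻¹ with hedef
  have he : 0 ≤ e := inv_nonneg.mpr (by linarith)
  refine ⟨Stmt9Aux.GmD A, Stmt9Aux.UmD A, (2 + 12 * e) / s, ?_, ?_, ?_, ?_, ?_, ?_⟩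
  · exact div_nonneg (by linarith) hs0.le
  · exact Stmt9Aux.GmD_add A
  · exact Stmt9Aux.GmD_smul A
  · exact Stmt9Aux.UmD_add A
  · exact Stmt9Aux.UmD_smul A
  intro f M C hM0 hC0 hMf hHf
  have h : Stmt9Aux.Hyp A ρ M C f := ⟨hMf, hHf⟩
  have hKge : (2 + 12 * e) * (M + C) ≤ (2 + 12 * e) / s * (M + C) := by
    have hnn : (0:ℝ) ≤ (2 + 12 * e) * (M + C) := by
      have : (0:ℝ) ≤ M + C := by linarith
      have h2 : (0:ℝ) ≤ 2 + 12 * e := by linarith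
      positivity
    rw [div_mul_eq_mul_div, le_div_iff₀ hs0]
    calc (2 + 12 * e) * (M + C) * s ≤ (2 + 12 * e) * (M + C) * 1 :=
          mul_le_mul_of_nonneg_left hs1 hnn
    _ = (2 + 12 * e) * (M + C) := by ring
  have pM : 0 ≤ M * e := mul_nonneg hM0 he
  have pC : 0 ≤ C * e := mul_nonneg hC0 he
  refine ⟨?_, ?_, ?_, ?_, ?_, ?_⟩
  · -- cohomological identity
    intro x hx
    have hT : (fun n : ℤ => x (n + 1)) = Stmt9Aux.shf 1 x := by
      funext n
      simp [Stmt9Aux.shf_apply]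
    rw [hT]
    exact Stmt9Aux.coh_identity A hρ0 hρ1 hM0 hC0 h hx
  · -- future dependence
    intro x y hx hy hxy
    exact Stmt9Aux.GmD_future A f hxy
  · -- g bound
    intro x hx
    have hb := Stmt9Aux.GmD_bound A hρ0 hρ1 hM0 hC0 h hx
    have : M + (2 * M + C) * e ≤ (2 + 12 * e) * (M + C) := by nlinarith
    calc |Stmt9Aux.GmD A f x| ≤ M + (2 * M + C) * (1 - ρ)⁻¹ := hb
    _ = M + (2 * M + C) * e := by rw [hedef]
    _ ≤ (2 + 12 * e) * (M + C) := this
    _ ≤ (2 + 12 * e) / s * (M + C) := hKge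
  · -- u bound
    intro x hx
    have hb := Stmt9Aux.UmD_bound A hρ0 hρ1 hM0 hC0 h hx
    have : (2 * M + C) * e ≤ (2 + 12 * e) * (M + C) := by nlinarith
    calc |Stmt9Aux.UmD A f x| ≤ (2 * M + C) * (1 - ρ)⁻¹ := hb
    _ = (2 * M + C) * e := by rw [hedef]
    _ ≤ (2 + 12 * e) * (M + C) := this
    _ ≤ (2 + 12 * e) / s * (M + C) := hKge
  · -- g Hölder
    intro n hn x y hx hy hxy
    exact Stmt9Aux.GmD_holder A hρ0 hρ1 hM0 hC0 h hn hx hy hxy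
  · -- u Hölder
    intro n hn x y hx hy hxy
    have hb := Stmt9Aux.UmD_holder A hρ0 hρ1 hM0 hC0 h hn hx hy hxy
    have hsn : (0:ℝ) ≤ s ^ n := pow_nonneg hs0.le n
    have h1 : 4 * C * (1 - ρ)⁻¹ = 4 * C * e := by rw [hedef]
    have h2 : 4 * C * e ≤ (2 + 12 * e) * (M + C) := by nlinarith
    calc |Stmt9Aux.UmD A f x - Stmt9Aux.UmD A f y|
        ≤ 4 * C * (1 - ρ)⁻¹ * Real.sqrt ρ ^ n := hb
    _ = 4 * C * e * s ^ n := by rw [h1, hsdef]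
    _ ≤ (2 + 12 * e) * (M + C) * s ^ n := mul_le_mul_of_nonneg_right h2 hsn
    _ ≤ (2 + 12 * e) / s * (M + C) * s ^ n := mul_le_mul_of_nonneg_right hKge hsn
end

section
/- Let p be a sub-Markov transition kernel on a countable set E equipped with a function d(e,·) : E → ℕ, and fix a base point e. Suppose there exist 0 < ρ < 1 and 0 < q < 1 such that: (i) p^{(n)}(e,x) ≤ ρ^n for all n ≥ 0 and all x ∈ E, and (ii) G(e,x) := Σ_{n≥0} p^{(n)}(e,x) ≥ q^{d(e,x)} for all x ∈ E. Then there exists Λ ≥ 1 such that for all x ∈ E: Σ_{n≥0} n · p^{(n)}(e,x) ≤ (Λ·d(e,x) + Λ) · G(e,x). -/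
open scoped Classical

/-- Iterated kernel `p^{(n)}` of a transition kernel `p` on a countable set. -/
noncomputable def iterK {E : Type*} (p : E → E → ℝ) : ℕ → E → E → ℝ
  | 0 => fun x y => if x = y then 1 else 0
  | n + 1 => fun x y => ∑' z : E, p x z * iterK p n z y

lemma iterK_nonneg {E : Type*} (p : E → E → ℝ) (hp0 : ∀ x y, 0 ≤ p x y) :
    ∀ (n : ℕ) (x y : E), 0 ≤ iterK p n x y := by
  intro n
  induction n with
  | zero => intro x y; simp only [iterK]; split <;> norm_num
  | succ n ih =>
      intro x y
      exact tsum_nonneg fun z => mul_nonneg (hp0 x z) (ih z y)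

set_option maxHeartbeats 1000000 in
/-- If a sub-Markov kernel `p` satisfies `p^{(n)}(e,x) ≤ ρⁿ` and its Green function
satisfies `G(e,x) ≥ q^{d(e,x)}`, then there is `Λ ≥ 1` with
`∑_n n·p^{(n)}(e,x) ≤ (Λ·d(e,x) + Λ)·G(e,x)` for all `x`. -/
theorem stmt12 {E : Type*} [Countable E] (p : E → E → ℝ) (d : E → ℕ) (e : E)
    (hp0 : ∀ x y, 0 ≤ p x y)
    (hpsum : ∀ x, Summable (p x)) (hpsub : ∀ x, ∑' y : E, p x y ≤ 1)
    (ρ q : ℝ) (hρ0 : 0 < ρ) (hρ1 : ρ < 1) (hq0 : 0 < q) (hq1 : q < 1)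
    (hdom : ∀ (n : ℕ) (x : E), iterK p n e x ≤ ρ ^ n)
    (hgreen : ∀ x : E, q ^ d x ≤ ∑' n : ℕ, iterK p n e x) :
    ∃ Λ : ℝ, 1 ≤ Λ ∧ ∀ x : E,
      (∑' n : ℕ, (n : ℝ) * iterK p n e x) ≤
        (Λ * d x + Λ) * ∑' n : ℕ, iterK p n e x := by
  set s : ℝ := Real.sqrt ρ with hs
  have hs0 : 0 < s := Real.sqrt_pos.2 hρ0
  have hs1 : s < 1 := by
    have := Real.sqrt_lt_sqrt hρ0.le hρ1
    simpa using this
  have hss : s * s = ρ := Real.mul_self_sqrt hρ0.le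
  have h1s : 0 < 1 - s := by linarith
  set C0 : ℝ := s / (1 - s) ^ 2 with hC0
  have hC0pos : 0 < C0 := by positivity
  set C1 : ℝ := C0 * (1 - s)⁻¹ with hC1
  have hC1pos : 0 < C1 := by positivity
  set c : ℝ := min 1 (1 / (2 * C1)) with hc
  have hc0 : 0 < c := lt_min one_pos (by positivity)
  have hc1 : c ≤ 1 := min_le_left _ _
  obtain ⟨M, hM⟩ : ∃ M : ℕ, s ^ M < q * c :=
    exists_pow_lt_of_lt_one (by positivity) hs1
  refine ⟨(M : ℝ) + 1, by simp [Nat.cast_nonneg], ?_⟩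
  intro x
  set a : ℕ → ℝ := fun n => iterK p n e x with ha
  have ha0 : ∀ n, 0 ≤ a n := fun n => iterK_nonneg p hp0 n e x
  have hale : ∀ n, a n ≤ ρ ^ n := fun n => hdom n x
  have hsumρ : Summable (fun n : ℕ => ρ ^ n) :=
    summable_geometric_of_lt_one hρ0.le hρ1
  have hsum_a : Summable a := Summable.of_nonneg_of_le ha0 hale hsumρ
  have hsum_nρ : Summable (fun n : ℕ => (n : ℝ) * ρ ^ n) := by
    have := summable_pow_mul_geometric_of_norm_lt_one (R := ℝ) 1
      (r := ρ) (by rwa [Real.norm_eq_abs, abs_of_pos hρ0])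
    simpa using this
  have hsum_na : Summable (fun n : ℕ => (n : ℝ) * a n) :=
    Summable.of_nonneg_of_le (fun n => mul_nonneg (Nat.cast_nonneg n) (ha0 n))
      (fun n => mul_le_mul_of_nonneg_left (hale n) (Nat.cast_nonneg n)) hsum_nρ
  set G : ℝ := ∑' n : ℕ, a n with hG
  have hGq : q ^ d x ≤ G := hgreen x
  have hG0 : 0 ≤ G := tsum_nonneg ha0
  set N : ℕ := M * (d x + 1) with hN
  -- split the sum
  have hsplit : (∑ i ∈ Finset.range N, (i : ℝ) * a i)
      + ∑' k : ℕ, ((k + N : ℕ) : ℝ) * a (k + N) = ∑' n : ℕ, (n : ℝ) * a n :=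
    Summable.sum_add_tsum_nat_add N hsum_na
  -- head bound
  have hhead : (∑ i ∈ Finset.range N, (i : ℝ) * a i) ≤ (N : ℝ) * G := by
    calc (∑ i ∈ Finset.range N, (i : ℝ) * a i)
        ≤ ∑ i ∈ Finset.range N, (N : ℝ) * a i := by
          refine Finset.sum_le_sum fun i hi => ?_
          have : (i : ℝ) ≤ (N : ℝ) := by
            exact_mod_cast (Finset.mem_range.1 hi).le
          exact mul_le_mul_of_nonneg_right this (ha0 i)
      _ = (N : ℝ) * ∑ i ∈ Finset.range N, a i := by rw [Finset.mul_sum]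
      _ ≤ (N : ℝ) * G :=
          mul_le_mul_of_nonneg_left (Summable.sum_le_tsum _ (fun i _ => ha0 i) hsum_a)
            (Nat.cast_nonneg N)
  -- pointwise bound: m * ρ^m ≤ C0 * s^m
  have hmρ : ∀ m : ℕ, (m : ℝ) * ρ ^ m ≤ C0 * s ^ m := by
    intro m
    have hms : (m : ℝ) * s ^ m ≤ C0 := by
      have hsum : Summable (fun n : ℕ => (n : ℝ) * s ^ n) := by
        have := summable_pow_mul_geometric_of_norm_lt_one (R := ℝ) 1
          (r := s) (by rwa [Real.norm_eq_abs, abs_of_pos hs0])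
        simpa using this
      have htsum : (∑' n : ℕ, (n : ℝ) * s ^ n) = C0 :=
        tsum_coe_mul_geometric_of_norm_lt_one
          (by rwa [Real.norm_eq_abs, abs_of_pos hs0])
      calc (m : ℝ) * s ^ m ≤ ∑' n : ℕ, (n : ℝ) * s ^ n :=
            Summable.le_tsum hsum m fun j _ => mul_nonneg (Nat.cast_nonneg j) (by positivity)
        _ = C0 := htsum
    have : ρ ^ m = s ^ m * s ^ m := by rw [← mul_pow, hss]
    calc (m : ℝ) * ρ ^ m = ((m : ℝ) * s ^ m) * s ^ m := by rw [this]; ring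
      _ ≤ C0 * s ^ m := mul_le_mul_of_nonneg_right hms (by positivity)
  -- tail bound
  have htail : (∑' k : ℕ, ((k + N : ℕ) : ℝ) * a (k + N)) ≤ C1 * s ^ N := by
    have hgeom : Summable (fun k : ℕ => C0 * s ^ (k + N)) := by
      apply Summable.mul_left
      exact (summable_geometric_of_lt_one hs0.le hs1).comp_injective
        (add_left_injective N)
    have hle : ∀ k : ℕ, ((k + N : ℕ) : ℝ) * a (k + N) ≤ C0 * s ^ (k + N) := by
      intro k
      calc ((k + N : ℕ) : ℝ) * a (k + N)
          ≤ ((k + N : ℕ) : ℝ) * ρ ^ (k + N) :=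
            mul_le_mul_of_nonneg_left (hale _) (Nat.cast_nonneg _)
        _ ≤ C0 * s ^ (k + N) := hmρ (k + N)
    have hlsum : Summable (fun k : ℕ => ((k + N : ℕ) : ℝ) * a (k + N)) :=
      (summable_nat_add_iff N).2 hsum_na
    calc (∑' k : ℕ, ((k + N : ℕ) : ℝ) * a (k + N))
        ≤ ∑' k : ℕ, C0 * s ^ (k + N) := Summable.tsum_le_tsum hle hlsum hgeom
      _ = C0 * (s ^ N * ∑' k : ℕ, s ^ k) := by
          simp_rw [pow_add]
          rw [tsum_mul_left, tsum_mul_right]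
          ring
      _ = C1 * s ^ N := by
          rw [tsum_geometric_of_lt_one hs0.le hs1, hC1]; ring
  -- tail is at most (1/2) * q ^ d x
  have hsN : s ^ N = (s ^ M) ^ (d x + 1) := by rw [← pow_mul]
  have htail2 : C1 * s ^ N ≤ (1 / 2) * q ^ d x := by
    have h1 : s ^ M ≤ q * c := hM.le
    have h2 : (s ^ M) ^ (d x + 1) ≤ (q * c) ^ (d x + 1) :=
      pow_le_pow_left₀ (by positivity) h1 _
    have h3 : (q * c) ^ (d x + 1) = q ^ (d x + 1) * c ^ (d x + 1) := mul_pow _ _ _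
    have h4 : q ^ (d x + 1) ≤ q ^ d x := by
      calc q ^ (d x + 1) = q ^ d x * q := pow_succ q (d x)
        _ ≤ q ^ d x * 1 := by
            exact mul_le_mul_of_nonneg_left hq1.le (by positivity)
        _ = q ^ d x := mul_one _
    have h5 : c ^ (d x + 1) ≤ c := by
      calc c ^ (d x + 1) ≤ c ^ 1 := pow_le_pow_of_le_one hc0.le hc1 (by omega)
        _ = c := pow_one c
    have h6 : c ≤ 1 / (2 * C1) := min_le_right _ _
    have h7 : (q * c) ^ (d x + 1) ≤ q ^ d x * (1 / (2 * C1)) := by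
      rw [h3]
      have : q ^ (d x + 1) * c ^ (d x + 1) ≤ q ^ d x * c := by
        apply mul_le_mul h4 h5 (by positivity) (by positivity)
      exact this.trans (mul_le_mul_of_nonneg_left h6 (by positivity))
    calc C1 * s ^ N = C1 * (s ^ M) ^ (d x + 1) := by rw [hsN]
      _ ≤ C1 * (q * c) ^ (d x + 1) :=
          mul_le_mul_of_nonneg_left h2 hC1pos.le
      _ ≤ C1 * (q ^ d x * (1 / (2 * C1))) :=
          mul_le_mul_of_nonneg_left h7 hC1pos.le
      _ = (1 / 2) * q ^ d x := by field_simp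
  have hhalf : (1 / 2 : ℝ) * q ^ d x ≤ (1 / 2) * G :=
    mul_le_mul_of_nonneg_left hGq (by norm_num)
  -- put together
  have hNle : (N : ℝ) + 1 ≤ (((M : ℝ) + 1) * d x + ((M : ℝ) + 1)) := by
    have : (N : ℝ) = (M : ℝ) * ((d x : ℝ) + 1) := by
      rw [hN]; push_cast; ring
    rw [this]
    have hd0 : (0 : ℝ) ≤ (d x : ℝ) := Nat.cast_nonneg _
    nlinarith
  calc (∑' n : ℕ, (n : ℝ) * a n)
      = (∑ i ∈ Finset.range N, (i : ℝ) * a i)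
        + ∑' k : ℕ, ((k + N : ℕ) : ℝ) * a (k + N) := hsplit.symm
    _ ≤ (N : ℝ) * G + (1 / 2) * G := by
        have := (htail.trans htail2).trans hhalf
        linarith [hhead]
    _ ≤ (((M : ℝ) + 1) * d x + ((M : ℝ) + 1)) * G := by
        have h := mul_le_mul_of_nonneg_right hNle hG0
        nlinarith
end
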